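/- arXiv:2308.12444 — 3 statements merged into one kernel-verified Lean document; each statement's English description precedes it below -/
import Mathlib

section
/- Let d ≥ 1, let x̃, θ, β† ∈ ℝ^d, and let y ∈ {−1, 1}. Then | [1 − y⟨x̃, β† + θ⟩]_+ − [1 − y⟨x̃, β†⟩]_+ + I(y⟨x̃, β†⟩ ≤ 1)·y⟨x̃, θ⟩ | ≤ |⟨x̃, θ⟩| · I( |1 − y⟨x̃, β†⟩| ≤ |⟨x̃, θ⟩| ), where [u]_+ = max(u,0), ⟨·,·⟩ is the Euclidean inner product, and I(·) is the indicator function. -/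
open scoped RealInnerProductSpace

lemma hinge_key (a t : ℝ) :
    |max (a - t) 0 - max a 0 + (if 0 ≤ a then (1:ℝ) else 0) * t|
      ≤ |t| * (if |a| ≤ |t| then (1:ℝ) else 0) := by
  have hta := le_abs_self t
  have hta' := neg_abs_le t
  rcases le_or_gt |a| |t| with h | h
  · have h1 := (abs_le.mp h).1
    have h2 := (abs_le.mp h).2
    rw [if_pos h, mul_one, abs_le]
    split_ifs with h0 <;>
      rcases le_total (a - t) 0 with h3 | h3 <;>
      rcases le_total a 0 with h4 | h4 <;>
      constructor <;>
      simp [max_eq_left, max_eq_right, h3, h4] <;> linarith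
  · rw [if_neg (not_le.mpr h), mul_zero]
    have h' := lt_abs.mp h
    rcases h' with h' | h'
    · have ha : 0 ≤ a := le_of_lt (lt_of_le_of_lt (abs_nonneg t) h')
      have h3 : 0 ≤ a - t := by linarith
      rw [if_pos ha, max_eq_left h3, max_eq_left ha]
      simp
    · have ha : ¬ (0 ≤ a) := by
        intro hh; have := abs_nonneg t; linarith
      have ha' : a ≤ 0 := le_of_not_ge ha
      have h3 : a - t ≤ 0 := by linarith
      rw [if_neg ha, max_eq_right h3, max_eq_right ha']
      simp

/-- For `x̃, θ, β† ∈ ℝ^d` and `y ∈ {−1, 1}`,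
`|[1 − y⟨x̃, β† + θ⟩]₊ − [1 − y⟨x̃, β†⟩]₊ + I(y⟨x̃, β†⟩ ≤ 1)·y⟨x̃, θ⟩|
  ≤ |⟨x̃, θ⟩| · I(|1 − y⟨x̃, β†⟩| ≤ |⟨x̃, θ⟩|)`. -/
theorem hinge_loss_linearization_error_bound (d : ℕ) (hd : 1 ≤ d)
    (x θ βdag : EuclideanSpace ℝ (Fin d)) (y : ℝ) (hy : y = -1 ∨ y = 1) :
    |max (1 - y * ⟪x, βdag + θ⟫) 0 - max (1 - y * ⟪x, βdag⟫) 0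
        + (if y * ⟪x, βdag⟫ ≤ 1 then (1 : ℝ) else 0) * (y * ⟪x, θ⟫)|
      ≤ |⟪x, θ⟫| * (if |1 - y * ⟪x, βdag⟫| ≤ |⟪x, θ⟫| then (1 : ℝ) else 0) := by
  have hyy : |y| = 1 := by rcases hy with h | h <;> simp [h]
  have hadd : ⟪x, βdag + θ⟫ = ⟪x, βdag⟫ + ⟪x, θ⟫ := inner_add_right _ _ _
  set A := ⟪x, βdag⟫ with hA
  set T := ⟪x, θ⟫ with hT
  have ht : |y * T| = |T| := by rw [abs_mul, hyy, one_mul]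
  have hcond : (y * A ≤ 1) ↔ (0 ≤ 1 - y * A) := by constructor <;> intro <;> linarith
  have h1 : 1 - y * (A + T) = (1 - y * A) - y * T := by ring
  rw [hadd, h1, if_congr hcond rfl rfl, ← ht]
  exact hinge_key (1 - y * A) (y * T)
end

section
/- Let d ≥ 1, let Λ : ℝ^d → ℝ be a convex function, let H be a real symmetric d×d matrix and c > 0 a constant with v^⊤Hv ≥ c‖v‖² for all v ∈ ℝ^d, let κ ∈ ℝ^d, ρ > 0, and define q(θ) = (1/2)(θ − κ)^⊤H(θ − κ) − (1/2)κ^⊤Hκ. Suppose Δ ≥ 0 satisfies |Λ(θ) − q(θ)| ≤ Δ for all θ with ‖θ − κ‖ ≤ ρ. Then for every θ with ‖θ − κ‖ ≥ ρ, Λ(θ) − Λ(κ) ≥ (‖θ − κ‖/ρ)·(cρ²/2 − 2Δ). -/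
open Matrix

/-! Rescale `θ` towards `κ` onto the sphere `‖θ' - κ‖ = ρ`. There `Λ θ' - Λ κ` is at least
`q θ' - q κ - 2Δ ≥ cρ²/2 - 2Δ`, and convexity along the segment from `κ` to `θ` multiplies this
increment by `‖θ - κ‖ / ρ`. -/

section ConvexGrowth

variable {E : Type*} [NormedAddCommGroup E] [NormedSpace ℝ E] {s : Set E} {f : E → ℝ}

theorem ConvexOn.apply_lineMap_sub_le (hf : ConvexOn ℝ s f) {a x : E} (ha : a ∈ s) (hx : x ∈ s)
    {t : ℝ} (ht₀ : 0 ≤ t) (ht₁ : t ≤ 1) :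
    f (AffineMap.lineMap a x t) - f a ≤ t * (f x - f a) := by
  have h := hf.2 ha hx (sub_nonneg.mpr ht₁) ht₀ (sub_add_cancel 1 t)
  rw [← AffineMap.lineMap_apply_module] at h
  simp only [smul_eq_mul] at h
  linarith

theorem ConvexOn.div_mul_le_sub_of_forall_sphere (hf : ConvexOn ℝ s f) {a x : E}
    (ha : a ∈ s) (hx : x ∈ s) {ρ m : ℝ} (hρ : 0 < ρ)
    (hm : ∀ y ∈ s, ‖y - a‖ = ρ → m ≤ f y - f a) (hax : ρ ≤ ‖x - a‖) :
    ‖x - a‖ / ρ * m ≤ f x - f a := by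
  have hr : 0 < ‖x - a‖ := hρ.trans_le hax
  set t := ρ / ‖x - a‖ with ht
  have ht₀ : 0 < t := div_pos hρ hr
  have ht₁ : t ≤ 1 := (div_le_one hr).mpr hax
  have hy : ‖AffineMap.lineMap a x t - a‖ = ρ := by
    rw [← dist_eq_norm, dist_lineMap_left, Real.norm_of_nonneg ht₀.le, dist_eq_norm',
      ht, div_mul_cancel₀ ρ hr.ne']
  have hmt : m ≤ t * (f x - f a) :=
    (hm _ (hf.1.lineMap_mem ha hx ⟨ht₀.le, ht₁⟩) hy).trans
      (hf.apply_lineMap_sub_le ha hx ht₀.le ht₁)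
  calc ‖x - a‖ / ρ * m ≤ ‖x - a‖ / ρ * (t * (f x - f a)) := by gcongr
    _ = f x - f a := by rw [ht]; field_simp

end ConvexGrowth

theorem sub_center_ge_of_coercive {ι : Type*} [Fintype ι] {H : Matrix ι ι ℝ} {c : ℝ}
    (hHc : ∀ v : EuclideanSpace ℝ ι,
      c * ‖v‖ ^ 2 ≤ (EuclideanSpace.equiv ι ℝ) v ⬝ᵥ H.mulVec ((EuclideanSpace.equiv ι ℝ) v))
    {κ : EuclideanSpace ℝ ι} {q : EuclideanSpace ℝ ι → ℝ}
    (hq : ∀ θ, q θ =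
      (1 / 2) * ((EuclideanSpace.equiv ι ℝ) (θ - κ) ⬝ᵥ
          H.mulVec ((EuclideanSpace.equiv ι ℝ) (θ - κ)))
        - (1 / 2) * ((EuclideanSpace.equiv ι ℝ) κ ⬝ᵥ H.mulVec ((EuclideanSpace.equiv ι ℝ) κ)))
    (θ : EuclideanSpace ℝ ι) :
    c / 2 * ‖θ - κ‖ ^ 2 ≤ q θ - q κ := by
  have hθ := hHc (θ - κ)
  rw [hq θ, hq κ, sub_self, map_zero, zero_dotProduct]
  linarith

theorem convex_quadratic_approx_linear_growth_general (d : ℕ)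
    (Λ : EuclideanSpace ℝ (Fin d) → ℝ) (hΛ : ConvexOn ℝ Set.univ Λ)
    (H : Matrix (Fin d) (Fin d) ℝ)
    (c : ℝ)
    (hHc : ∀ v : EuclideanSpace ℝ (Fin d),
      c * ‖v‖ ^ 2 ≤ (EuclideanSpace.equiv (Fin d) ℝ) v ⬝ᵥ
        H.mulVec ((EuclideanSpace.equiv (Fin d) ℝ) v))
    (κ : EuclideanSpace ℝ (Fin d)) (ρ : ℝ) (hρ : 0 < ρ)
    (q : EuclideanSpace ℝ (Fin d) → ℝ)
    (hq : ∀ θ, q θ =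
      (1 / 2) * ((EuclideanSpace.equiv (Fin d) ℝ) (θ - κ) ⬝ᵥ
          H.mulVec ((EuclideanSpace.equiv (Fin d) ℝ) (θ - κ)))
        - (1 / 2) * ((EuclideanSpace.equiv (Fin d) ℝ) κ ⬝ᵥ
          H.mulVec ((EuclideanSpace.equiv (Fin d) ℝ) κ)))
    (Δ : ℝ)
    (happrox : ∀ θ, ‖θ - κ‖ ≤ ρ → |Λ θ - q θ| ≤ Δ) :
    ∀ θ, ρ ≤ ‖θ - κ‖ →
      (‖θ - κ‖ / ρ) * (c * ρ ^ 2 / 2 - 2 * Δ) ≤ Λ θ - Λ κ := by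
  intro θ hθ
  refine hΛ.div_mul_le_sub_of_forall_sphere (Set.mem_univ κ) (Set.mem_univ θ) hρ
    (fun y _ hy => ?_) hθ
  have hqy := sub_center_ge_of_coercive hHc hq y
  rw [hy] at hqy
  have hΛy := abs_le.mp (happrox y hy.le)
  have hΛκ := abs_le.mp (happrox κ (by simpa using hρ.le))
  linarith

/-- A convex function that is uniformly `Δ`-close on the ball of radius `ρ`
around `κ` to the quadratic `q(θ) = ½(θ−κ)ᵀH(θ−κ) − ½κᵀHκ`, where `H` is symmetric with
`vᵀHv ≥ c‖v‖²`, grows at least linearly outside the ball: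
for `‖θ − κ‖ ≥ ρ`, `Λ(θ) − Λ(κ) ≥ (‖θ−κ‖/ρ)·(cρ²/2 − 2Δ)`. -/
theorem convex_quadratic_approx_linear_growth (d : ℕ) (hd : 1 ≤ d)
    (Λ : EuclideanSpace ℝ (Fin d) → ℝ) (hΛ : ConvexOn ℝ Set.univ Λ)
    (H : Matrix (Fin d) (Fin d) ℝ) (hHsymm : H.IsSymm)
    (c : ℝ) (hc : 0 < c)
    (hHc : ∀ v : EuclideanSpace ℝ (Fin d),
      c * ‖v‖ ^ 2 ≤ (EuclideanSpace.equiv (Fin d) ℝ) v ⬝ᵥ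
        H.mulVec ((EuclideanSpace.equiv (Fin d) ℝ) v))
    (κ : EuclideanSpace ℝ (Fin d)) (ρ : ℝ) (hρ : 0 < ρ)
    (q : EuclideanSpace ℝ (Fin d) → ℝ)
    (hq : ∀ θ, q θ =
      (1 / 2) * ((EuclideanSpace.equiv (Fin d) ℝ) (θ - κ) ⬝ᵥ
          H.mulVec ((EuclideanSpace.equiv (Fin d) ℝ) (θ - κ)))
        - (1 / 2) * ((EuclideanSpace.equiv (Fin d) ℝ) κ ⬝ᵥ
          H.mulVec ((EuclideanSpace.equiv (Fin d) ℝ) κ)))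
    (Δ : ℝ) (hΔ : 0 ≤ Δ)
    (happrox : ∀ θ, ‖θ - κ‖ ≤ ρ → |Λ θ - q θ| ≤ Δ) :
    ∀ θ, ρ ≤ ‖θ - κ‖ →
      (‖θ - κ‖ / ρ) * (c * ρ ^ 2 / 2 - 2 * Δ) ≤ Λ θ - Λ κ :=
  convex_quadratic_approx_linear_growth_general d Λ hΛ H c hHc κ ρ hρ q hq Δ happrox
end

section
/- Let d ≥ 1, let Λ : ℝ^d → ℝ be a convex function, let H be a real symmetric d×d matrix and c > 0 a constant with v^⊤Hv ≥ c‖v‖² for all v ∈ ℝ^d, let κ ∈ ℝ^d, ρ > 0, and define q(θ) = (1/2)(θ − κ)^⊤H(θ − κ) − (1/2)κ^⊤Hκ. Suppose Δ ≥ 0 satisfies |Λ(θ) − q(θ)| ≤ Δ for all θ with ‖θ − κ‖ ≤ ρ, and additionally 4Δ < cρ². Then Λ(θ) > Λ(κ) for every θ with ‖θ − κ‖ > ρ; consequently every global minimizer θ* of Λ satisfies ‖θ* − κ‖ ≤ ρ. -/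
open Matrix

/-- Under the hypotheses of Statement 3 and additionally `4Δ < cρ²`,
a convex function `Λ` that is uniformly `Δ`-close on the ball of radius `ρ` around `κ`
to the quadratic `q(θ) = ½(θ−κ)ᵀH(θ−κ) − ½κᵀHκ` (with `vᵀHv ≥ c‖v‖²`) satisfies
`Λ(θ) > Λ(κ)` for every `θ` with `‖θ − κ‖ > ρ`; consequently every global minimizer
`θ*` of `Λ` satisfies `‖θ* − κ‖ ≤ ρ`. -/
theorem convex_quadratic_approx_localization (d : ℕ) (hd : 1 ≤ d)
    (Λ : EuclideanSpace ℝ (Fin d) → ℝ) (hΛ : ConvexOn ℝ Set.univ Λ)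
    (H : Matrix (Fin d) (Fin d) ℝ) (hHsymm : H.IsSymm)
    (c : ℝ) (hc : 0 < c)
    (hHc : ∀ v : EuclideanSpace ℝ (Fin d),
      c * ‖v‖ ^ 2 ≤ (EuclideanSpace.equiv (Fin d) ℝ) v ⬝ᵥ
        H.mulVec ((EuclideanSpace.equiv (Fin d) ℝ) v))
    (κ : EuclideanSpace ℝ (Fin d)) (ρ : ℝ) (hρ : 0 < ρ)
    (q : EuclideanSpace ℝ (Fin d) → ℝ)
    (hq : ∀ θ, q θ =
      (1 / 2) * ((EuclideanSpace.equiv (Fin d) ℝ) (θ - κ) ⬝ᵥ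
          H.mulVec ((EuclideanSpace.equiv (Fin d) ℝ) (θ - κ)))
        - (1 / 2) * ((EuclideanSpace.equiv (Fin d) ℝ) κ ⬝ᵥ
          H.mulVec ((EuclideanSpace.equiv (Fin d) ℝ) κ)))
    (Δ : ℝ) (hΔ : 0 ≤ Δ)
    (happrox : ∀ θ, ‖θ - κ‖ ≤ ρ → |Λ θ - q θ| ≤ Δ)
    (hgap : 4 * Δ < c * ρ ^ 2) :
    (∀ θ, ρ < ‖θ - κ‖ → Λ κ < Λ θ) ∧
      ∀ θstar, (∀ θ, Λ θstar ≤ Λ θ) → ‖θstar - κ‖ ≤ ρ := by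
  have key : ∀ θ, ρ < ‖θ - κ‖ → Λ κ < Λ θ := by
    intro θ hθ
    have hr : (0:ℝ) < ‖θ - κ‖ := hρ.trans hθ
    set t := ρ / ‖θ - κ‖ with ht
    have ht0 : 0 < t := div_pos hρ hr
    have ht1 : t < 1 := (div_lt_one hr).2 hθ
    set m := κ + t • (θ - κ) with hm
    have hmκ : m - κ = t • (θ - κ) := by rw [hm]; abel
    have hnorm : ‖m - κ‖ = ρ := by
      rw [hmκ, norm_smul, Real.norm_eq_abs, abs_of_pos ht0, ht]
      field_simp
    set A := (EuclideanSpace.equiv (Fin d) ℝ) κ ⬝ᵥ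
        H.mulVec ((EuclideanSpace.equiv (Fin d) ℝ) κ) with hA
    have hqκ : q κ = - (1/2) * A := by
      rw [hq κ]
      simp [hA]
    have hqm : (1/2) * (c * ρ^2) - (1/2) * A ≤ q m := by
      have := hHc (m - κ)
      rw [hnorm] at this
      rw [hq m]
      linarith
    have hΛm : (1/2) * (c * ρ^2) - (1/2) * A - Δ ≤ Λ m := by
      have h1 := happrox m (le_of_eq hnorm)
      have h2 := abs_le.1 h1
      linarith [h2.1]
    have hΛκ : Λ κ ≤ - (1/2) * A + Δ := by
      have h1 := happrox κ (by simp [hρ.le])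
      have h2 := abs_le.1 h1
      rw [hqκ] at h2
      linarith [h2.2]
    have hgapm : Λ κ < Λ m := by linarith
    have hconv := hΛ.2 (Set.mem_univ κ) (Set.mem_univ θ)
      (by linarith : (0:ℝ) ≤ 1 - t) ht0.le (by ring)
    have hcomb : (1 - t) • κ + t • θ = m := by
      rw [hm]; module
    rw [hcomb] at hconv
    simp only [smul_eq_mul] at hconv
    have : t * Λ κ < t * Λ θ := by nlinarith
    exact lt_of_mul_lt_mul_left this ht0.le
  refine ⟨key, fun θstar hmin => ?_⟩
  by_contra h
  push_neg at h
  exact absurd (hmin κ) (not_le.2 (key θstar h))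
end
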